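/- If two triangles A₁A₂A₃ and B₁B₂B₃ in the real projective plane are perspective from a line s (the three points A_kA_j ∩ B_kB_j lie on s), and C_k is defined as the intersection of lines A_iB_j and A_jB_i for each permutation (i,j,k) of (1,2,3), then the triangle C₁C₂C₃ is perspective to A₁A₂A₃ from the line s; that is, for each k, the intersection point of lines A_iA_j and C_iC_j lies on s. -/

import Mathlib

/-!
In homogeneous coordinates the line through `u, v` has dual coordinates `u ⨯₃ v`, and two lines
meet in the cross product of their dual coordinates. Writing `W = det(A₁ ⨯₃ B₁, A₂ ⨯₃ B₂, A₃ ⨯₃ B₃)`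
(which vanishes iff the lines `AᵢBᵢ` are concurrent), two polynomial identities carry the proof:
`det(L₁, L₂, L₃) = det A · det B · W` and `det(Cᵢ, Cⱼ, Lₖ) = -det(Aₖ, Bᵢ, Bⱼ) · det(Aᵢ, Aⱼ, Bₖ) · W`.
As the `Lₖ` lie on `s` and the triangles are nondegenerate, the first gives `W = 0` (Desargues),
and then the second makes every `Cᵢ, Cⱼ, Lₖ` collinear.
-/

/-- Collinearity of three points of the real projective plane,
given by homogeneous coordinate vectors in `ℝ³`. -/
def collin (u v w : Fin 3 → ℝ) : Prop :=
  Matrix.det (Matrix.of ![u, v, w]) = 0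

/-- `X` is the (well-defined) intersection point of the line through `u, v`
and the line through `w, z`. -/
def IsInter (u v w z X : Fin 3 → ℝ) : Prop :=
  X ≠ 0 ∧ LinearIndependent ℝ ![u, v] ∧ LinearIndependent ℝ ![w, z] ∧
    collin u v X ∧ collin w z X ∧ ¬ (collin u v w ∧ collin u v z)

/-- A point with homogeneous coordinates `X` lies on the line with
homogeneous dual coordinates `s`. -/
def OnLine (s X : Fin 3 → ℝ) : Prop := dotProduct s X = 0

open Matrix

section Identities

variable {R : Type*} [CommRing R]

def meet (u v w z : Fin 3 → R) : Fin 3 → R := (u ⨯₃ v) ⨯₃ (w ⨯₃ z)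

theorem det_meets (A₁ A₂ A₃ B₁ B₂ B₃ : Fin 3 → R) :
    det (of ![meet A₂ A₃ B₂ B₃, meet A₁ A₃ B₁ B₃, meet A₁ A₂ B₁ B₂]) =
      det (of ![A₁, A₂, A₃]) * det (of ![B₁, B₂, B₃]) *
        det (of ![A₁ ⨯₃ B₁, A₂ ⨯₃ B₂, A₃ ⨯₃ B₃]) := by
  simp only [meet, cross_apply, det_fin_three, of_apply, cons_val_zero, cons_val_one,
    cons_val_two, Nat.succ_eq_add_one, Nat.reduceAdd, head_cons, tail_cons]
  ring

theorem det_diagonal_meets_one (A₁ A₂ A₃ B₁ B₂ B₃ : Fin 3 → R) :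
    det (of ![meet A₁ B₃ A₃ B₁, meet A₁ B₂ A₂ B₁, meet A₂ A₃ B₂ B₃]) =
      -(det (of ![A₁, B₂, B₃]) * det (of ![A₂, A₃, B₁]) *
        det (of ![A₁ ⨯₃ B₁, A₂ ⨯₃ B₂, A₃ ⨯₃ B₃])) := by
  simp only [meet, cross_apply, det_fin_three, of_apply, cons_val_zero, cons_val_one,
    cons_val_two, Nat.succ_eq_add_one, Nat.reduceAdd, head_cons, tail_cons]
  ring

theorem det_diagonal_meets_two (A₁ A₂ A₃ B₁ B₂ B₃ : Fin 3 → R) :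
    det (of ![meet A₂ B₃ A₃ B₂, meet A₁ B₂ A₂ B₁, meet A₁ A₃ B₁ B₃]) =
      -(det (of ![A₂, B₁, B₃]) * det (of ![A₁, A₃, B₂]) *
        det (of ![A₁ ⨯₃ B₁, A₂ ⨯₃ B₂, A₃ ⨯₃ B₃])) := by
  simp only [meet, cross_apply, det_fin_three, of_apply, cons_val_zero, cons_val_one,
    cons_val_two, Nat.succ_eq_add_one, Nat.reduceAdd, head_cons, tail_cons]
  ring

theorem det_diagonal_meets_three (A₁ A₂ A₃ B₁ B₂ B₃ : Fin 3 → R) :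
    det (of ![meet A₂ B₃ A₃ B₂, meet A₁ B₃ A₃ B₁, meet A₁ A₂ B₁ B₂]) =
      -(det (of ![A₃, B₁, B₂]) * det (of ![A₁, A₂, B₃]) *
        det (of ![A₁ ⨯₃ B₁, A₂ ⨯₃ B₂, A₃ ⨯₃ B₃])) := by
  simp only [meet, cross_apply, det_fin_three, of_apply, cons_val_zero, cons_val_one,
    cons_val_two, Nat.succ_eq_add_one, Nat.reduceAdd, head_cons, tail_cons]
  ring

end Identities

theorem collin_iff_cross_dotProduct (u v w : Fin 3 → ℝ) :
    collin u v w ↔ u ⨯₃ v ⬝ᵥ w = 0 := by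
  rw [dotProduct_comm, triple_product_permutation, triple_product_eq_det]
  rfl

theorem collin_smul_iff {a b c : ℝ} (ha : a ≠ 0) (hb : b ≠ 0) (hc : c ≠ 0) (u v w : Fin 3 → ℝ) :
    collin (a • u) (b • v) (c • w) ↔ collin u v w := by
  simp only [collin_iff_cross_dotProduct, map_smul, LinearMap.smul_apply, smul_dotProduct,
    dotProduct_smul, smul_eq_mul, mul_eq_zero, ha, hb, hc, false_or]

theorem collin_of_onLine {s u v w : Fin 3 → ℝ} (hs : s ≠ 0)
    (hu : OnLine s u) (hv : OnLine s v) (hw : OnLine s w) : collin u v w := by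
  unfold OnLine at hu hv hw
  refine exists_mulVec_eq_zero_iff.mp ⟨s, hs, ?_⟩
  ext i
  fin_cases i
  · simpa [mulVec, dotProduct_comm] using hu
  · simpa [mulVec, dotProduct_comm] using hv
  · simpa [mulVec, dotProduct_comm] using hw

theorem meet_ne_zero {u v w z : Fin 3 → ℝ} (hwz : LinearIndependent ℝ ![w, z])
    (hne : ¬ (collin u v w ∧ collin u v z)) : meet u v w z ≠ 0 := by
  intro h
  rw [meet, cross_cross_eq_smul_sub_smul', sub_eq_add_neg, ← neg_smul] at h
  obtain ⟨hz, hw⟩ := LinearIndependent.pair_iff.mp hwz _ _ h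
  rw [neg_eq_zero, dotProduct_comm] at hw
  exact hne ⟨(collin_iff_cross_dotProduct _ _ _).mpr hw,
    (collin_iff_cross_dotProduct _ _ _).mpr hz⟩

theorem IsInter.exists_eq_smul_meet {u v w z X : Fin 3 → ℝ} (h : IsInter u v w z X) :
    ∃ t : ℝ, t ≠ 0 ∧ X = t • meet u v w z := by
  obtain ⟨hX, -, hwz, huvX, hwzX, hne⟩ := h
  rw [collin_iff_cross_dotProduct] at huvX hwzX
  have hcross : meet u v w z ⨯₃ X = 0 := by
    rw [meet, cross_cross_eq_smul_sub_smul, huvX, hwzX, zero_smul, zero_smul, sub_zero]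
  obtain ⟨t, rfl⟩ : ∃ t : ℝ, t • meet u v w z = X := by
    by_contra! hdep
    exact crossProduct_ne_zero_iff_linearIndependent.mpr
      ((LinearIndependent.pair_iff' (meet_ne_zero hwz hne)).mpr hdep) hcross
  exact ⟨t, by rintro rfl; simp at hX, rfl⟩

theorem dual_generalized_desargues_general
    (s A1 A2 A3 B1 B2 B3 L1 L2 L3 C1 C2 C3 : Fin 3 → ℝ)
    (hs : s ≠ 0)
    (hAnd : ¬ collin A1 A2 A3) (hBnd : ¬ collin B1 B2 B3)
    (hL1 : IsInter A2 A3 B2 B3 L1) (hL1s : OnLine s L1)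
    (hL2 : IsInter A1 A3 B1 B3 L2) (hL2s : OnLine s L2)
    (hL3 : IsInter A1 A2 B1 B2 L3) (hL3s : OnLine s L3)
    (hC1 : IsInter A2 B3 A3 B2 C1)
    (hC2 : IsInter A1 B3 A3 B1 C2)
    (hC3 : IsInter A1 B2 A2 B1 C3) :
    (∃ M : Fin 3 → ℝ, M ≠ 0 ∧ collin A2 A3 M ∧ collin C2 C3 M ∧ OnLine s M) ∧
    (∃ M : Fin 3 → ℝ, M ≠ 0 ∧ collin A1 A3 M ∧ collin C1 C3 M ∧ OnLine s M) ∧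
    (∃ M : Fin 3 → ℝ, M ≠ 0 ∧ collin A1 A2 M ∧ collin C1 C2 M ∧ OnLine s M) := by
  obtain ⟨t₁, ht₁, rfl⟩ := hL1.exists_eq_smul_meet
  obtain ⟨t₂, ht₂, rfl⟩ := hL2.exists_eq_smul_meet
  obtain ⟨t₃, ht₃, rfl⟩ := hL3.exists_eq_smul_meet
  obtain ⟨u₁, hu₁, rfl⟩ := hC1.exists_eq_smul_meet
  obtain ⟨u₂, hu₂, rfl⟩ := hC2.exists_eq_smul_meet
  obtain ⟨u₃, hu₃, rfl⟩ := hC3.exists_eq_smul_meet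
  have hW : det (of ![A1 ⨯₃ B1, A2 ⨯₃ B2, A3 ⨯₃ B3]) = 0 := by
    have h := (collin_smul_iff ht₁ ht₂ ht₃ _ _ _).mp (collin_of_onLine hs hL1s hL2s hL3s)
    rw [collin, det_meets] at h
    exact (mul_eq_zero.mp h).resolve_left (mul_ne_zero hAnd hBnd)
  refine ⟨⟨_, hL1.1, hL1.2.2.2.1, ?_, hL1s⟩, ⟨_, hL2.1, hL2.2.2.2.1, ?_, hL2s⟩,
    ⟨_, hL3.1, hL3.2.2.2.1, ?_, hL3s⟩⟩
  · rw [collin_smul_iff hu₂ hu₃ ht₁, collin, det_diagonal_meets_one, hW, mul_zero, neg_zero]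
  · rw [collin_smul_iff hu₁ hu₃ ht₂, collin, det_diagonal_meets_two, hW, mul_zero, neg_zero]
  · rw [collin_smul_iff hu₁ hu₂ ht₃, collin, det_diagonal_meets_three, hW, mul_zero, neg_zero]

/-- **Dual generalized Desargues theorem.**  If triangles `A₁A₂A₃` and
`B₁B₂B₃` are perspective from a line `s` (the intersection points
`L_k = A_kA_j ∩ B_kB_j` of corresponding sides lie on `s`), and
`C_k = A_iB_j ∩ A_jB_i`, then `C₁C₂C₃` is perspective to `A₁A₂A₃` from `s`:
for each `k`, the intersection of `A_iA_j` with `C_iC_j` lies on `s`. -/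
theorem dual_generalized_desargues
    (s A1 A2 A3 B1 B2 B3 L1 L2 L3 C1 C2 C3 : Fin 3 → ℝ)
    (hs : s ≠ 0)
    (hA1 : A1 ≠ 0) (hA2 : A2 ≠ 0) (hA3 : A3 ≠ 0)
    (hB1 : B1 ≠ 0) (hB2 : B2 ≠ 0) (hB3 : B3 ≠ 0)
    (hAnd : ¬ collin A1 A2 A3) (hBnd : ¬ collin B1 B2 B3)
    (hL1 : IsInter A2 A3 B2 B3 L1) (hL1s : OnLine s L1)
    (hL2 : IsInter A1 A3 B1 B3 L2) (hL2s : OnLine s L2)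
    (hL3 : IsInter A1 A2 B1 B2 L3) (hL3s : OnLine s L3)
    (hC1 : IsInter A2 B3 A3 B2 C1)
    (hC2 : IsInter A1 B3 A3 B1 C2)
    (hC3 : IsInter A1 B2 A2 B1 C3) :
    (∃ M : Fin 3 → ℝ, M ≠ 0 ∧ collin A2 A3 M ∧ collin C2 C3 M ∧ OnLine s M) ∧
    (∃ M : Fin 3 → ℝ, M ≠ 0 ∧ collin A1 A3 M ∧ collin C1 C3 M ∧ OnLine s M) ∧
    (∃ M : Fin 3 → ℝ, M ≠ 0 ∧ collin A1 A2 M ∧ collin C1 C2 M ∧ OnLine s M) :=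
  dual_generalized_desargues_general s A1 A2 A3 B1 B2 B3 L1 L2 L3 C1 C2 C3 hs hAnd hBnd hL1 hL1s hL2
    hL2s hL3 hL3s hC1 hC2 hC3
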